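/- arXiv:1808.09595 — 2 statements merged into one kernel-verified Lean document; each statement's English description precedes it below -/
import Mathlib

section
/- Let q ≥ 1 be an integer, N = 2^q, and let B^{(k)} (1 ≤ k ≤ q) be the Galerkin coarse-grid matrices of the constant-kernel stiffness matrix, defined by B^{(1)} = B and B^{(k)} = W_k B^{(k−1)} W_kᵀ. Then for every 1 ≤ k ≤ q, the matrix H^{(k)} := B^{(k)} − (2^{3k−5}/3)·N·L_{N/2^{k−1}−1} is positive semidefinite, where L_n = tridiag(−1, 2, −1) is the n×n discrete Laplacian. -/
open Matrix

/-- The `(N−1)×(N−1)` constant-kernel stiffness matrix: `2N/3 − 1` on the diagonal,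
`N/6 − 1` on the first sub/super-diagonals, and `−1` elsewhere. -/
noncomputable def constB (N : ℕ) : Matrix (Fin (N - 1)) (Fin (N - 1)) ℝ :=
  Matrix.of fun i j =>
    if (i : ℕ) = (j : ℕ) then 2 * (N : ℝ) / 3 - 1
    else if (i : ℕ) + 1 = (j : ℕ) ∨ (j : ℕ) + 1 = (i : ℕ) then (N : ℝ) / 6 - 1
    else -1

/-- Four times the full-weighting restriction: rows have the stencil `[1, 2, 1]`
(row `i` acts on columns `2i−1, 2i, 2i+1` in 1-based numbering). -/
def Wgen (m n : ℕ) : Matrix (Fin m) (Fin n) ℝ :=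
  Matrix.of fun i j =>
    if (j : ℕ) = 2 * (i : ℕ) then 1
    else if (j : ℕ) = 2 * (i : ℕ) + 1 then 2
    else if (j : ℕ) = 2 * (i : ℕ) + 2 then 1
    else 0

/-- The Galerkin coarse-grid hierarchy of the constant-kernel stiffness matrix, indexed
so that `Bseq q (k-1)` is the level-`k` matrix `B^{(k)}` of size `N/2^{k−1} − 1`,
`N = 2^q`: `Bseq q 0 = constB (2^q)` and `Bseq q (j+1) = W ⬝ Bseq q j ⬝ Wᵀ`. -/
noncomputable def Bseq (q : ℕ) : (j : ℕ) → Matrix (Fin (2 ^ (q - j) - 1)) (Fin (2 ^ (q - j) - 1)) ℝ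
  | 0 => constB (2 ^ q)
  | j + 1 =>
      Wgen (2 ^ (q - (j + 1)) - 1) (2 ^ (q - j) - 1) * Bseq q j *
        (Wgen (2 ^ (q - (j + 1)) - 1) (2 ^ (q - j) - 1))ᵀ

/-- The `n × n` one-dimensional discrete Laplacian `tridiag(−1, 2, −1)`. -/
def lap (n : ℕ) : Matrix (Fin n) (Fin n) ℝ :=
  Matrix.of fun i j =>
    if (i : ℕ) = (j : ℕ) then 2
    else if (i : ℕ) + 1 = (j : ℕ) ∨ (j : ℕ) + 1 = (i : ℕ) then -1
    else 0

/-! ### Auxiliary development -/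


/-- entry function of a 3-value symmetric Toeplitz matrix -/
noncomputable def gent (a b c : ℝ) (u v : ℕ) : ℝ :=
  if u = v then a else if u + 1 = v ∨ v + 1 = u then b else c

noncomputable def toepM (n : ℕ) (a b c : ℝ) : Matrix (Fin n) (Fin n) ℝ :=
  Matrix.of fun i j => gent a b c i j

lemma gent_eq {a b c : ℝ} {u v : ℕ} (h : u = v) : gent a b c u v = a := by
  simp [gent, h]

lemma gent_adj {a b c : ℝ} {u v : ℕ} (h : u + 1 = v ∨ v + 1 = u) : gent a b c u v = b := by
  unfold gent; rw [if_neg (by omega), if_pos h]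

lemma gent_far {a b c : ℝ} {u v : ℕ} (h1 : u ≠ v) (h2 : ¬(u + 1 = v ∨ v + 1 = u)) :
    gent a b c u v = c := by
  unfold gent; rw [if_neg h1, if_neg h2]

lemma sum_ite_fin {n : ℕ} (a : ℕ) (ha : a < n) (h : Fin n → ℝ) :
    ∑ s : Fin n, (if (s : ℕ) = a then h s else 0) = h ⟨a, ha⟩ := by
  rw [Finset.sum_eq_single (⟨a, ha⟩ : Fin n)]
  · simp
  · intro b _ hb
    rw [if_neg (by simpa [Fin.ext_iff] using hb)]
  · simp

lemma Wrow {m n : ℕ} (i : Fin m) (h : 2 * (i : ℕ) + 2 < n) (g : Fin n → ℝ) :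
    ∑ s : Fin n, Wgen m n i s * g s
      = g ⟨2 * i, by omega⟩ + 2 * g ⟨2 * i + 1, by omega⟩ + g ⟨2 * i + 2, h⟩ := by
  have key : ∀ s : Fin n, Wgen m n i s * g s
      = (if (s : ℕ) = 2 * (i : ℕ) then g s else 0)
        + (if (s : ℕ) = 2 * (i : ℕ) + 1 then 2 * g s else 0)
        + (if (s : ℕ) = 2 * (i : ℕ) + 2 then g s else 0) := by
    intro s
    simp only [Wgen, of_apply]
    split_ifs <;> first | ring1 | (exfalso; omega)
  rw [Finset.sum_congr rfl fun s _ => key s]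
  rw [Finset.sum_add_distrib, Finset.sum_add_distrib,
    sum_ite_fin (2 * (i : ℕ)) (by omega) g,
    sum_ite_fin (2 * (i : ℕ) + 1) (by omega) (fun s => 2 * g s),
    sum_ite_fin (2 * (i : ℕ) + 2) h g]

lemma conj_toep (m n : ℕ) (hn : n = 2 * m + 1) (a b c : ℝ) :
    Wgen m n * toepM n a b c * (Wgen m n)ᵀ
      = toepM m (6 * a + 8 * b + 2 * c) (a + 4 * b + 11 * c) (16 * c) := by
  subst hn
  ext i j
  have hi : 2 * (i : ℕ) + 2 < 2 * m + 1 := by omega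
  have hj : 2 * (j : ℕ) + 2 < 2 * m + 1 := by omega
  have e1 : ∀ t, (Wgen m (2 * m + 1) * toepM (2 * m + 1) a b c) i t
      = gent a b c (2 * i) t + 2 * gent a b c (2 * i + 1) t + gent a b c (2 * i + 2) t := by
    intro t
    rw [mul_apply, Wrow i hi (fun s => toepM (2 * m + 1) a b c s t)]
    rfl
  rw [mul_apply]
  calc ∑ t, (Wgen m (2 * m + 1) * toepM (2 * m + 1) a b c) i t * (Wgen m (2 * m + 1))ᵀ t j
      = ∑ t, Wgen m (2 * m + 1) j t *
          ((Wgen m (2 * m + 1) * toepM (2 * m + 1) a b c) i t) := by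
        refine Finset.sum_congr rfl fun t _ => ?_
        rw [transpose_apply, mul_comm]
    _ = _ := by
        rw [Wrow j hj (fun t => (Wgen m (2 * m + 1) * toepM (2 * m + 1) a b c) i t)]
        simp only [e1]
        show _ = gent _ _ _ (i : ℕ) (j : ℕ)
        rcases Nat.lt_trichotomy (i : ℕ) (j : ℕ) with h | h | h
        · rcases eq_or_lt_of_le (Nat.succ_le_of_lt h) with h1 | h1
          · -- i + 1 = j
            rw [gent_adj (u := (i:ℕ)) (v := (j:ℕ)) (by omega),
              gent_far (u := 2*(i:ℕ)) (v := 2*(j:ℕ)) (by omega) (by omega),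
              gent_far (u := 2*(i:ℕ)) (v := 2*(j:ℕ)+1) (by omega) (by omega),
              gent_far (u := 2*(i:ℕ)) (v := 2*(j:ℕ)+2) (by omega) (by omega),
              gent_adj (u := 2*(i:ℕ)+1) (v := 2*(j:ℕ)) (by omega),
              gent_far (u := 2*(i:ℕ)+1) (v := 2*(j:ℕ)+1) (by omega) (by omega),
              gent_far (u := 2*(i:ℕ)+1) (v := 2*(j:ℕ)+2) (by omega) (by omega),
              gent_eq (u := 2*(i:ℕ)+2) (v := 2*(j:ℕ)) (by omega),
              gent_adj (u := 2*(i:ℕ)+2) (v := 2*(j:ℕ)+1) (by omega),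
              gent_far (u := 2*(i:ℕ)+2) (v := 2*(j:ℕ)+2) (by omega) (by omega)]
            ring
          · -- far, i < j
            rw [gent_far (u := (i:ℕ)) (v := (j:ℕ)) (by omega) (by omega),
              gent_far (u := 2*(i:ℕ)) (v := 2*(j:ℕ)) (by omega) (by omega),
              gent_far (u := 2*(i:ℕ)) (v := 2*(j:ℕ)+1) (by omega) (by omega),
              gent_far (u := 2*(i:ℕ)) (v := 2*(j:ℕ)+2) (by omega) (by omega),
              gent_far (u := 2*(i:ℕ)+1) (v := 2*(j:ℕ)) (by omega) (by omega),
              gent_far (u := 2*(i:ℕ)+1) (v := 2*(j:ℕ)+1) (by omega) (by omega),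
              gent_far (u := 2*(i:ℕ)+1) (v := 2*(j:ℕ)+2) (by omega) (by omega),
              gent_far (u := 2*(i:ℕ)+2) (v := 2*(j:ℕ)) (by omega) (by omega),
              gent_far (u := 2*(i:ℕ)+2) (v := 2*(j:ℕ)+1) (by omega) (by omega),
              gent_far (u := 2*(i:ℕ)+2) (v := 2*(j:ℕ)+2) (by omega) (by omega)]
            ring
        · -- i = j
          rw [gent_eq (u := (i:ℕ)) (v := (j:ℕ)) h,
            gent_eq (u := 2*(i:ℕ)) (v := 2*(j:ℕ)) (by omega),
            gent_adj (u := 2*(i:ℕ)) (v := 2*(j:ℕ)+1) (by omega),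
            gent_far (u := 2*(i:ℕ)) (v := 2*(j:ℕ)+2) (by omega) (by omega),
            gent_adj (u := 2*(i:ℕ)+1) (v := 2*(j:ℕ)) (by omega),
            gent_eq (u := 2*(i:ℕ)+1) (v := 2*(j:ℕ)+1) (by omega),
            gent_adj (u := 2*(i:ℕ)+1) (v := 2*(j:ℕ)+2) (by omega),
            gent_far (u := 2*(i:ℕ)+2) (v := 2*(j:ℕ)) (by omega) (by omega),
            gent_adj (u := 2*(i:ℕ)+2) (v := 2*(j:ℕ)+1) (by omega),
            gent_eq (u := 2*(i:ℕ)+2) (v := 2*(j:ℕ)+2) (by omega)]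
          ring
        · rcases eq_or_lt_of_le (Nat.succ_le_of_lt h) with h1 | h1
          · -- j + 1 = i
            rw [gent_adj (u := (i:ℕ)) (v := (j:ℕ)) (by omega),
              gent_eq (u := 2*(i:ℕ)) (v := 2*(j:ℕ)+2) (by omega),
              gent_adj (u := 2*(i:ℕ)) (v := 2*(j:ℕ)+1) (by omega),
              gent_far (u := 2*(i:ℕ)) (v := 2*(j:ℕ)) (by omega) (by omega),
              gent_adj (u := 2*(i:ℕ)+1) (v := 2*(j:ℕ)+2) (by omega),
              gent_far (u := 2*(i:ℕ)+1) (v := 2*(j:ℕ)+1) (by omega) (by omega),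
              gent_far (u := 2*(i:ℕ)+1) (v := 2*(j:ℕ)) (by omega) (by omega),
              gent_far (u := 2*(i:ℕ)+2) (v := 2*(j:ℕ)+2) (by omega) (by omega),
              gent_far (u := 2*(i:ℕ)+2) (v := 2*(j:ℕ)+1) (by omega) (by omega),
              gent_far (u := 2*(i:ℕ)+2) (v := 2*(j:ℕ)) (by omega) (by omega)]
            ring
          · -- far, j < i
            rw [gent_far (u := (i:ℕ)) (v := (j:ℕ)) (by omega) (by omega),
              gent_far (u := 2*(i:ℕ)) (v := 2*(j:ℕ)) (by omega) (by omega),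
              gent_far (u := 2*(i:ℕ)) (v := 2*(j:ℕ)+1) (by omega) (by omega),
              gent_far (u := 2*(i:ℕ)) (v := 2*(j:ℕ)+2) (by omega) (by omega),
              gent_far (u := 2*(i:ℕ)+1) (v := 2*(j:ℕ)) (by omega) (by omega),
              gent_far (u := 2*(i:ℕ)+1) (v := 2*(j:ℕ)+1) (by omega) (by omega),
              gent_far (u := 2*(i:ℕ)+1) (v := 2*(j:ℕ)+2) (by omega) (by omega),
              gent_far (u := 2*(i:ℕ)+2) (v := 2*(j:ℕ)) (by omega) (by omega),
              gent_far (u := 2*(i:ℕ)+2) (v := 2*(j:ℕ)+1) (by omega) (by omega),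
              gent_far (u := 2*(i:ℕ)+2) (v := 2*(j:ℕ)+2) (by omega) (by omega)]
            ring

lemma Bseq_closed (q : ℕ) : ∀ j, j ≤ q →
    Bseq q j = toepM (2 ^ (q - j) - 1)
      (2 * 8 ^ j * (2:ℝ) ^ q / 3 - 16 ^ j)
      ((8:ℝ) ^ j * 2 ^ q / 6 - 16 ^ j)
      (-(16:ℝ) ^ j) := by
  intro j
  induction j with
  | zero =>
      intro _
      ext i j
      simp only [Bseq, constB, toepM, of_apply, gent]
      push_cast
      norm_num
  | succ j ih =>
      intro hj
      have hj' : j ≤ q := by omega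
      have hsz : 2 ^ (q - j) - 1 = 2 * (2 ^ (q - (j + 1)) - 1) + 1 := by
        have h1 : q - j = (q - (j + 1)) + 1 := by omega
        have h2 : 1 ≤ 2 ^ (q - (j + 1)) := Nat.one_le_two_pow
        rw [h1, pow_succ]
        omega
      show Wgen _ _ * Bseq q j * (Wgen _ _)ᵀ = _
      rw [ih hj', conj_toep _ _ hsz]
      have e1 : 6 * (2 * 8 ^ j * (2:ℝ) ^ q / 3 - 16 ^ j)
          + 8 * ((8:ℝ) ^ j * 2 ^ q / 6 - 16 ^ j) + 2 * (-(16:ℝ) ^ j)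
          = 2 * 8 ^ (j+1) * (2:ℝ) ^ q / 3 - 16 ^ (j+1) := by ring
      have e2 : (2 * 8 ^ j * (2:ℝ) ^ q / 3 - 16 ^ j)
          + 4 * ((8:ℝ) ^ j * 2 ^ q / 6 - 16 ^ j) + 11 * (-(16:ℝ) ^ j)
          = (8:ℝ) ^ (j+1) * 2 ^ q / 6 - 16 ^ (j+1) := by ring
      have e3 : 16 * (-(16:ℝ) ^ j) = -(16:ℝ) ^ (j+1) := by ring
      rw [e1, e2, e3]

lemma psd_core (m : ℕ) :
    (((m:ℝ)) • (1 : Matrix (Fin m) (Fin m) ℝ) - Matrix.of (fun _ _ => (1:ℝ))).PosSemidef := by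
  refine posSemidef_iff_dotProduct_mulVec.mpr ⟨?_, ?_⟩
  · ext i j
    simp only [conjTranspose_apply, Matrix.sub_apply, Matrix.smul_apply, one_apply, of_apply, star_trivial,
      smul_eq_mul]
    by_cases h : i = j
    · subst h; simp
    · rw [if_neg h, if_neg (fun hh => h hh.symm)]
  · intro x
    have hmv : ((((m:ℝ)) • (1 : Matrix (Fin m) (Fin m) ℝ) - Matrix.of (fun _ _ => (1:ℝ))) *ᵥ x)
        = fun i => (m:ℝ) * x i - ∑ j, x j := by
      funext i
      simp [mulVec, dotProduct, Matrix.sub_apply, Matrix.smul_apply, one_apply, sub_mul, mul_ite, ite_mul,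
        mul_zero, zero_mul, one_mul, mul_one, Finset.sum_sub_distrib, Finset.sum_ite_eq,
        smul_eq_mul]
    rw [hmv]
    have : (star x) ⬝ᵥ (fun i => (m:ℝ) * x i - ∑ j, x j)
        = (m:ℝ) * (∑ i, x i ^ 2) - (∑ i, x i) ^ 2 := by
      simp only [dotProduct, star_trivial, Pi.star_apply, mul_sub, Finset.sum_sub_distrib,
        Finset.mul_sum]
      congr 1
      · exact Finset.sum_congr rfl fun i _ => by ring
      · rw [sq, Finset.sum_mul_sum]
    rw [this]
    have hcs : (∑ i, x i) ^ 2 ≤ (m:ℝ) * ∑ i, x i ^ 2 := by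
      have := sq_sum_le_card_mul_sum_sq (s := (Finset.univ : Finset (Fin m))) (f := x)
      simpa using this
    linarith

def Ymat (m n : ℕ) : Matrix (Fin m) (Fin n) ℝ :=
  Matrix.of fun s i => if (i : ℕ) = (s : ℕ) ∨ (i : ℕ) + 1 = (s : ℕ) then 1 else 0

lemma Ycol {m n : ℕ} (h : n + 1 = m) (i : Fin n) (g : Fin m → ℝ) :
    ∑ s : Fin m, Ymat m n s i * g s = g ⟨i, by omega⟩ + g ⟨(i : ℕ) + 1, by omega⟩ := by
  have key : ∀ s : Fin m, Ymat m n s i * g s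
      = (if (s : ℕ) = (i : ℕ) then g s else 0) + (if (s : ℕ) = (i : ℕ) + 1 then g s else 0) := by
    intro s
    simp only [Ymat, of_apply]
    split_ifs <;> first | ring1 | (exfalso; omega)
  rw [Finset.sum_congr rfl fun s _ => key s, Finset.sum_add_distrib,
    sum_ite_fin (i : ℕ) (by omega) g, sum_ite_fin ((i : ℕ) + 1) (by omega) g]

lemma key_conj (m n : ℕ) (h : n + 1 = m) :
    (Ymat m n)ᵀ * (((m : ℝ)) • (1 : Matrix (Fin m) (Fin m) ℝ) - Matrix.of (fun _ _ => (1:ℝ)))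
        * Ymat m n
      = Matrix.of (fun i j : Fin n => (m : ℝ) * gent 2 1 0 i j - 4) := by
  set D := ((m : ℝ)) • (1 : Matrix (Fin m) (Fin m) ℝ) - Matrix.of (fun _ _ => (1:ℝ)) with hD
  ext i j
  have e1 : ∀ t, ((Ymat m n)ᵀ * D) i t
      = D ⟨i, by omega⟩ t + D ⟨(i : ℕ) + 1, by omega⟩ t := by
    intro t
    rw [mul_apply]
    have e : ∑ s, (Ymat m n)ᵀ i s * D s t = ∑ s, Ymat m n s i * D s t :=
      Finset.sum_congr rfl fun s _ => by rw [transpose_apply]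
    rw [e, Ycol h i (fun s => D s t)]
  rw [mul_apply]
  have e2 : ∑ t, ((Ymat m n)ᵀ * D) i t * Ymat m n t j
      = ∑ t, Ymat m n t j * ((Ymat m n)ᵀ * D) i t :=
    Finset.sum_congr rfl fun t _ => mul_comm _ _
  rw [e2, Ycol h j (fun t => ((Ymat m n)ᵀ * D) i t), e1, e1]
  simp only [hD, Matrix.sub_apply, Matrix.smul_apply, one_apply, of_apply, smul_eq_mul, Fin.mk.injEq, gent]
  split_ifs <;> first | ring1 | (exfalso; omega)

/-- **Comparison of the coarse-grid matrices with the discrete Laplacian.**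
For `N = 2^q` and `1 ≤ k ≤ q`, the matrix
`H^{(k)} = B^{(k)} − (2^{3k−5}/3)N · L_{N/2^{k−1}−1}` is positive semidefinite. -/
theorem stmt17 (q : ℕ) (hq : 1 ≤ q) (k : ℕ) (hk1 : 1 ≤ k) (hk2 : k ≤ q) :
    (Bseq q (k - 1) -
      ((2 : ℝ) ^ (3 * (k : ℤ) - 5) / 3 * (2 : ℝ) ^ q) • lap (2 ^ (q - (k - 1)) - 1)).PosSemidef := by
  obtain ⟨j, rfl⟩ : ∃ j, k = j + 1 := ⟨k - 1, by omega⟩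
  have hjq : j + 1 ≤ q := hk2
  show (Bseq q j -
      ((2 : ℝ) ^ (3 * ((j + 1 : ℕ) : ℤ) - 5) / 3 * (2 : ℝ) ^ q) •
        lap (2 ^ (q - j) - 1)).PosSemidef
  have hnm : (2 ^ (q - j) - 1) + 1 = 2 ^ (q - j) :=
    Nat.succ_pred_eq_of_pos (Nat.pow_pos (by norm_num))
  rw [Bseq_closed q j (by omega)]
  have ht : (2 : ℝ) ^ (3 * ((j + 1 : ℕ) : ℤ) - 5) = 8 ^ j / 4 := by
    push_cast
    rw [show 3 * ((j : ℤ) + 1) - 5 = 3 * (j : ℤ) - 2 by ring,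
      zpow_sub₀ (by norm_num : (2:ℝ) ≠ 0),
      show 3 * (j : ℤ) = ((3 * j : ℕ) : ℤ) by push_cast; ring, zpow_natCast, pow_mul]
    norm_num
  rw [ht]
  have h2q : (2:ℝ) ^ q = 2 ^ (q - j) * 2 ^ j := by
    rw [← pow_add]; congr 1; omega
  have h16 : (8:ℝ) ^ j * 2 ^ j = 16 ^ j := by rw [← mul_pow]; norm_num
  have hfact : toepM (2 ^ (q - j) - 1)
        (2 * 8 ^ j * (2:ℝ) ^ q / 3 - 16 ^ j)
        ((8:ℝ) ^ j * 2 ^ q / 6 - 16 ^ j)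
        (-(16:ℝ) ^ j)
      - ((8:ℝ) ^ j / 4 / 3 * (2:ℝ) ^ q) • lap (2 ^ (q - j) - 1)
      = ((16:ℝ) ^ j / 4) •
          ((Ymat (2 ^ (q - j)) (2 ^ (q - j) - 1))ᵀ *
            (((2 ^ (q - j) : ℕ) : ℝ) • (1 : Matrix (Fin (2 ^ (q - j))) (Fin (2 ^ (q - j))) ℝ)
              - Matrix.of (fun _ _ => (1:ℝ)))
            * Ymat (2 ^ (q - j)) (2 ^ (q - j) - 1)) := by
    rw [key_conj _ _ hnm]
    ext i j'
    simp only [Matrix.sub_apply, Matrix.smul_apply, smul_eq_mul, of_apply, toepM, lap, gent]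
    rw [h2q]
    push_cast
    split_ifs
    · linear_combination ((2:ℝ) ^ (q - j) / 2) * h16
    · linear_combination ((2:ℝ) ^ (q - j) / 4) * h16
    · ring
  rw [hfact]
  have hpsd : ((Ymat (2 ^ (q - j)) (2 ^ (q - j) - 1))ᵀ *
      (((2 ^ (q - j) : ℕ) : ℝ) • (1 : Matrix (Fin (2 ^ (q - j))) (Fin (2 ^ (q - j))) ℝ)
        - Matrix.of (fun _ _ => (1:ℝ)))
      * Ymat (2 ^ (q - j)) (2 ^ (q - j) - 1)).PosSemidef := by
    have h1 := (psd_core (2 ^ (q - j))).conjTranspose_mul_mul_same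
      (Ymat (2 ^ (q - j)) (2 ^ (q - j) - 1))
    rwa [show (Ymat (2 ^ (q - j)) (2 ^ (q - j) - 1))ᴴ
        = (Ymat (2 ^ (q - j)) (2 ^ (q - j) - 1))ᵀ from by
      ext a b; simp [conjTranspose_apply]] at h1
  refine posSemidef_iff_dotProduct_mulVec.mpr ⟨?_, ?_⟩
  · rw [IsHermitian, conjTranspose_smul, star_trivial, hpsd.1]
  · intro x
    rw [smul_mulVec, dotProduct_smul, smul_eq_mul]
    exact mul_nonneg (by positivity) (hpsd.dotProduct_mulVec_nonneg x)
end

section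
/- Let q ≥ 2 be an integer, N = 2^q, and let B be the (N−1)×(N−1) constant-kernel stiffness matrix with diagonal part D. Let η₀ be a real number with λ_max(D⁻¹B) ≤ η₀ < 3, let 0 < ω < 2/η₀ and 0 < η ≤ ω(2 − ωη₀). Let W be the (N/2−1)×(N−1) matrix with W_{i,2i−1} = 1, W_{i,2i} = 2, W_{i,2i+1} = 1 and all other entries 0; set the prolongation P = (1/2)Wᵀ, the restriction R = (1/4)W, K = I − ωD⁻¹B, and T = I − P(RBP)⁻¹RB. Then RBP is invertible and the two-grid method converges with factor at most √(1 − η/4): for every v ∈ ℝ^{N−1}, (KTv)ᵀB(KTv) ≤ (1 − η/4)·vᵀBv. -/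
open Matrix

open Finset


noncomputable def padv {n : ℕ} (v : Fin n → ℝ) : ℕ → ℝ :=
  fun j => if h : 1 ≤ j ∧ j ≤ n then v ⟨j - 1, by omega⟩ else 0

lemma padv_zero {n : ℕ} (v : Fin n → ℝ) : padv v 0 = 0 := by simp [padv]

lemma padv_of_gt {n : ℕ} (v : Fin n → ℝ) {j : ℕ} (h : n < j) : padv v j = 0 := by
  simp only [padv]; rw [dif_neg]; omega

lemma padv_succ {n : ℕ} (v : Fin n → ℝ) (k : ℕ) :
    padv v (k + 1) = if h : k < n then v ⟨k, h⟩ else 0 := by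
  simp only [padv]
  by_cases h : k < n
  · rw [dif_pos (by omega : 1 ≤ k + 1 ∧ k + 1 ≤ n), dif_pos h]
    congr 1
  · rw [dif_neg (by omega), dif_neg h]

lemma padv_coe {n : ℕ} (v : Fin n → ℝ) (i : Fin n) : padv v ((i : ℕ) + 1) = v i := by
  rw [padv_succ, dif_pos i.isLt]

lemma sum_fin_ite {n : ℕ} (f : Fin n → ℝ) (k : ℕ) :
    (∑ j : Fin n, if (j : ℕ) = k then f j else 0) = if h : k < n then f ⟨k, h⟩ else 0 := by
  by_cases h : k < n
  · rw [dif_pos h]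
    have h1 : ∀ j : Fin n, (if (j : ℕ) = k then f j else 0)
        = (if j = ⟨k, h⟩ then f j else 0) := by
      intro j; apply if_congr _ rfl rfl; rw [Fin.ext_iff]
    rw [Finset.sum_congr rfl (fun j _ => h1 j), Finset.sum_ite_eq' univ (⟨k, h⟩ : Fin n) f,
      if_pos (mem_univ _)]
  · rw [dif_neg h]
    apply Finset.sum_eq_zero
    intro j _
    rw [if_neg]; exact fun hc => h (hc ▸ j.isLt)

/-- componentwise formula for `Wᵀ *ᵥ x`. -/
lemma WgenT_mulVec {m n : ℕ} (x : Fin m → ℝ) (j : Fin n) :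
    ((Wgen m n)ᵀ *ᵥ x) j
      = if (j : ℕ) % 2 = 1 then 2 * padv x (((j : ℕ) + 1) / 2)
        else padv x ((j : ℕ) / 2) + padv x ((j : ℕ) / 2 + 1) := by
  have h0 : ((Wgen m n)ᵀ *ᵥ x) j = ∑ i : Fin m, Wgen m n i j * x i := by
    simp [mulVec, dotProduct, transpose_apply]
  rw [h0]
  rcases Nat.even_or_odd (j : ℕ) with ⟨t, ht⟩ | ⟨t, ht⟩
  · -- even : (j : ℕ) = t + t
    have hmod : ¬ ((j : ℕ) % 2 = 1) := by omega
    have hdiv : (j : ℕ) / 2 = t := by omega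
    rw [if_neg hmod, hdiv]
    have hsummand : ∀ i : Fin m, Wgen m n i j * x i
        = (if (i : ℕ) = t then x i else 0) + (if (i : ℕ) + 1 = t then x i else 0) := by
      intro i
      simp only [Wgen, Matrix.of_apply]
      split_ifs
      all_goals (try ring)
      all_goals (exfalso; omega)
    rw [Finset.sum_congr rfl (fun i _ => hsummand i), Finset.sum_add_distrib]
    have e1 : (∑ i : Fin m, if (i : ℕ) = t then x i else 0) = padv x (t + 1) := by
      rw [sum_fin_ite, padv_succ]
    have e2 : (∑ i : Fin m, if (i : ℕ) + 1 = t then x i else 0) = padv x t := by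
      rcases t with _ | u
      · rw [padv_zero]
        apply Finset.sum_eq_zero; intro i _; rw [if_neg (by omega)]
      · have h1 : ∀ i : Fin m, (if (i : ℕ) + 1 = u + 1 then x i else 0)
            = (if (i : ℕ) = u then x i else 0) := by
          intro i; apply if_congr (by omega) rfl rfl
        rw [Finset.sum_congr rfl (fun i _ => h1 i), sum_fin_ite, padv_succ]
    rw [e1, e2]; ring
  · -- odd : (j : ℕ) = 2 * t + 1
    have hmod : (j : ℕ) % 2 = 1 := by omega
    have hdiv : ((j : ℕ) + 1) / 2 = t + 1 := by omega
    rw [if_pos hmod, hdiv]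
    have hsummand : ∀ i : Fin m, Wgen m n i j * x i
        = (if (i : ℕ) = t then 2 * x i else 0) := by
      intro i
      simp only [Wgen, Matrix.of_apply]
      split_ifs
      all_goals (try ring)
      all_goals (exfalso; omega)
    rw [Finset.sum_congr rfl (fun i _ => hsummand i), sum_fin_ite, padv_succ]
    by_cases h : t < m
    · rw [dif_pos h, dif_pos h]
    · rw [dif_neg h, dif_neg h]; ring

lemma fin_sum_eq_pad {n : ℕ} (v : Fin n → ℝ) (F : ℝ → ℝ) (hF : F 0 = 0) :
    ∑ i : Fin n, F (v i) = ∑ j ∈ range (n + 1), F (padv v j) := by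
  have h1 : ∑ i : Fin n, F (v i) = ∑ k ∈ range n, F (padv v (k + 1)) := by
    rw [← Fin.sum_univ_eq_sum_range (fun k => F (padv v (k + 1))) n]
    exact Finset.sum_congr rfl (fun i _ => by rw [padv_coe])
  rw [h1, Finset.sum_range_succ' (fun j => F (padv v j)) n, padv_zero, hF, add_zero]

lemma fin_adj_sum {n : ℕ} (v : Fin n → ℝ) :
    ∑ i : Fin n, padv v ((i : ℕ) + 1) * padv v ((i : ℕ) + 2)
      = ∑ j ∈ range (n + 1), padv v j * padv v (j + 1) := by
  rw [Fin.sum_univ_eq_sum_range (fun k => padv v (k + 1) * padv v (k + 2)) n,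
    Finset.sum_range_succ' (fun j => padv v j * padv v (j + 1)) n, padv_zero, zero_mul, add_zero]

lemma quadform {n : ℕ} (v : Fin n → ℝ) :
    v ⬝ᵥ (constB (n + 1) *ᵥ v)
      = (2 * ((n : ℝ) + 1) / 3) * (∑ j ∈ range (n + 1), padv v j ^ 2)
      + (((n : ℝ) + 1) / 3) * (∑ j ∈ range (n + 1), padv v j * padv v (j + 1))
      - (∑ j ∈ range (n + 1), padv v j) ^ 2 := by
  have hB : ∀ i j : Fin n, constB (n + 1) i j
      = -(1 : ℝ) + ((if (i : ℕ) = (j : ℕ) then (2 * ((n : ℝ) + 1) / 3) else 0)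
        + ((if (i : ℕ) + 1 = (j : ℕ) then ((n : ℝ) + 1) / 6 else 0)
        + (if (j : ℕ) + 1 = (i : ℕ) then ((n : ℝ) + 1) / 6 else 0))) := by
    intro i j
    show (if (i : ℕ) = (j : ℕ) then 2 * ((n + 1 : ℕ) : ℝ) / 3 - 1
      else if (i : ℕ) + 1 = (j : ℕ) ∨ (j : ℕ) + 1 = (i : ℕ) then ((n + 1 : ℕ) : ℝ) / 6 - 1
      else -1) = _
    push_cast
    split_ifs
    all_goals (try ring)
    all_goals (exfalso; omega)
  have key : v ⬝ᵥ (constB (n + 1) *ᵥ v)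
      = ∑ i : Fin n, ∑ j : Fin n,
          (-(v i * v j) + ((if (i : ℕ) = (j : ℕ) then (2 * ((n : ℝ) + 1) / 3) * (v i * v j) else 0)
            + ((if (i : ℕ) + 1 = (j : ℕ) then (((n : ℝ) + 1) / 6) * (v i * v j) else 0)
            + (if (j : ℕ) + 1 = (i : ℕ) then (((n : ℝ) + 1) / 6) * (v i * v j) else 0)))) := by
    simp only [dotProduct, mulVec]
    apply Finset.sum_congr rfl
    intro i _
    rw [Finset.mul_sum]
    apply Finset.sum_congr rfl
    intro j _
    rw [hB i j]
    split_ifs <;> ring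
  rw [key]
  simp only [Finset.sum_add_distrib]
  -- piece 1
  have E1 : ∑ i : Fin n, ∑ j : Fin n, -(v i * v j)
      = -((∑ j ∈ range (n + 1), padv v j) ^ 2) := by
    simp only [Finset.sum_neg_distrib]
    rw [← Finset.sum_mul_sum, ← fin_sum_eq_pad v (fun x => x) rfl]
    ring
  -- piece 2
  have E2 : ∑ i : Fin n, ∑ j : Fin n,
      (if (i : ℕ) = (j : ℕ) then (2 * ((n : ℝ) + 1) / 3) * (v i * v j) else 0)
      = (2 * ((n : ℝ) + 1) / 3) * (∑ j ∈ range (n + 1), padv v j ^ 2) := by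
    rw [← fin_sum_eq_pad v (fun x => x ^ 2) (by norm_num), Finset.mul_sum]
    apply Finset.sum_congr rfl
    intro i _
    have : ∀ j : Fin n, (if (i : ℕ) = (j : ℕ) then (2 * ((n : ℝ) + 1) / 3) * (v i * v j) else 0)
        = (if (j : ℕ) = (i : ℕ) then (2 * ((n : ℝ) + 1) / 3) * (v i * v j) else 0) := by
      intro j; apply if_congr (eq_comm) rfl rfl
    rw [Finset.sum_congr rfl (fun j _ => this j), sum_fin_ite, dif_pos i.isLt]
    have : (⟨(i : ℕ), i.isLt⟩ : Fin n) = i := rfl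
    rw [this]; ring
  -- piece 3
  have E3 : ∑ i : Fin n, ∑ j : Fin n,
      (if (i : ℕ) + 1 = (j : ℕ) then (((n : ℝ) + 1) / 6) * (v i * v j) else 0)
      = (((n : ℝ) + 1) / 6) * (∑ j ∈ range (n + 1), padv v j * padv v (j + 1)) := by
    rw [← fin_adj_sum v, Finset.mul_sum]
    apply Finset.sum_congr rfl
    intro i _
    have h1 : ∀ j : Fin n, (if (i : ℕ) + 1 = (j : ℕ) then (((n : ℝ) + 1) / 6) * (v i * v j) else 0)
        = (if (j : ℕ) = (i : ℕ) + 1 then (((n : ℝ) + 1) / 6) * (v i * v j) else 0) := by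
      intro j; apply if_congr (eq_comm) rfl rfl
    rw [Finset.sum_congr rfl (fun j _ => h1 j), sum_fin_ite, padv_coe]
    rw [show (i : ℕ) + 2 = ((i : ℕ) + 1) + 1 from rfl, padv_succ]
    by_cases h : (i : ℕ) + 1 < n
    · rw [dif_pos h, dif_pos h]; try ring
    · rw [dif_neg h, dif_neg h]; try ring
  -- piece 4
  have E4 : ∑ i : Fin n, ∑ j : Fin n,
      (if (j : ℕ) + 1 = (i : ℕ) then (((n : ℝ) + 1) / 6) * (v i * v j) else 0)
      = (((n : ℝ) + 1) / 6) * (∑ j ∈ range (n + 1), padv v j * padv v (j + 1)) := by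
    rw [Finset.sum_comm, ← fin_adj_sum v, Finset.mul_sum]
    apply Finset.sum_congr rfl
    intro j _
    have h1 : ∀ i : Fin n, (if (j : ℕ) + 1 = (i : ℕ) then (((n : ℝ) + 1) / 6) * (v i * v j) else 0)
        = (if (i : ℕ) = (j : ℕ) + 1 then (((n : ℝ) + 1) / 6) * (v i * v j) else 0) := by
      intro i; apply if_congr (eq_comm) rfl rfl
    rw [Finset.sum_congr rfl (fun i _ => h1 i), sum_fin_ite, padv_coe]
    rw [show (j : ℕ) + 2 = ((j : ℕ) + 1) + 1 from rfl, padv_succ]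
    by_cases h : (j : ℕ) + 1 < n
    · rw [dif_pos h, dif_pos h]; try ring
    · rw [dif_neg h, dif_neg h]; try ring
  rw [E1, E2, E3, E4]
  ring

lemma sum_shift' {n : ℕ} (g : ℕ → ℝ) (hg0 : g 0 = 0) (hgt : g (n + 1) = 0) (F : ℝ → ℝ)
    (hF : F 0 = 0) :
    ∑ j ∈ range (n + 1), F (g (j + 1)) = ∑ j ∈ range (n + 1), F (g j) := by
  have h1 : ∑ j ∈ range (n + 2), F (g j)
      = ∑ j ∈ range (n + 1), F (g (j + 1)) + F (g 0) := Finset.sum_range_succ' _ _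
  have h2 : ∑ j ∈ range (n + 2), F (g j)
      = ∑ j ∈ range (n + 1), F (g j) + F (g (n + 1)) := Finset.sum_range_succ _ _
  rw [hg0, hF] at h1; rw [hgt, hF] at h2; linarith

lemma gDD_eq {n : ℕ} (g : ℕ → ℝ) (hg0 : g 0 = 0) (hgt : g (n + 1) = 0) :
    ∑ j ∈ range (n + 1), (g (j + 1) - g j) ^ 2
      = 2 * (∑ j ∈ range (n + 1), g j ^ 2) - 2 * (∑ j ∈ range (n + 1), g j * g (j + 1)) := by
  have h1 : ∑ j ∈ range (n + 1), (g (j + 1) - g j) ^ 2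
      = ∑ j ∈ range (n + 1), (g (j + 1) ^ 2 + g j ^ 2 - 2 * (g j * g (j + 1))) :=
    Finset.sum_congr rfl (fun j _ => by ring)
  rw [h1, Finset.sum_sub_distrib, Finset.sum_add_distrib, ← Finset.mul_sum,
    sum_shift' g hg0 hgt (fun x => x ^ 2) (by norm_num)]
  ring

lemma gSS_eq {n : ℕ} (g : ℕ → ℝ) (hg0 : g 0 = 0) (hgt : g (n + 1) = 0) :
    ∑ j ∈ range (n + 1), (g j + g (j + 1)) ^ 2
      = 2 * (∑ j ∈ range (n + 1), g j ^ 2) + 2 * (∑ j ∈ range (n + 1), g j * g (j + 1)) := by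
  have h1 : ∑ j ∈ range (n + 1), (g j + g (j + 1)) ^ 2
      = ∑ j ∈ range (n + 1), (g (j + 1) ^ 2 + g j ^ 2 + 2 * (g j * g (j + 1))) :=
    Finset.sum_congr rfl (fun j _ => by ring)
  rw [h1, Finset.sum_add_distrib, Finset.sum_add_distrib, ← Finset.mul_sum,
    sum_shift' g hg0 hgt (fun x => x ^ 2) (by norm_num)]
  ring

/-- the central inequality: `d · Σ δ² ≤ 8 Q`. -/
lemma gkey {n : ℕ} (g : ℕ → ℝ) (hg0 : g 0 = 0) (hgt : g (n + 1) = 0) :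
    (2 * ((n : ℝ) + 1) / 3 - 1) * (∑ j ∈ range (n + 1), (g (j + 1) - g j) ^ 2)
      ≤ 8 * ((2 * ((n : ℝ) + 1) / 3) * (∑ j ∈ range (n + 1), g j ^ 2)
           + (((n : ℝ) + 1) / 3) * (∑ j ∈ range (n + 1), g j * g (j + 1))
           - (∑ j ∈ range (n + 1), g j) ^ 2) := by
  set S2 := ∑ j ∈ range (n + 1), g j ^ 2 with hS2
  set A := ∑ j ∈ range (n + 1), g j * g (j + 1) with hA
  set Sm := ∑ j ∈ range (n + 1), g j with hSm
  have hDD := gDD_eq g hg0 hgt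
  have hSS := gSS_eq g hg0 hgt
  have hDD0 : (0:ℝ) ≤ ∑ j ∈ range (n + 1), (g (j + 1) - g j) ^ 2 :=
    Finset.sum_nonneg (fun j _ => sq_nonneg _)
  -- Cauchy–Schwarz on the `s`-sum
  have hsum : ∑ j ∈ range (n + 1), (g j + g (j + 1)) = 2 * Sm := by
    rw [Finset.sum_add_distrib, sum_shift' g hg0 hgt (fun x => x) rfl]; ring
  have hC : (∑ j ∈ range (n + 1), (g j + g (j + 1))) ^ 2
      ≤ ((n : ℝ) + 1) * ∑ j ∈ range (n + 1), (g j + g (j + 1)) ^ 2 := by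
    have := sq_sum_le_card_mul_sum_sq (s := range (n + 1)) (f := fun j => g j + g (j + 1))
    simpa using this
  rw [hsum, hSS] at hC
  rw [hDD] at hDD0 ⊢
  nlinarith [hC, hDD0]

-- also need odd/even split lemmas from t1
lemma sum_range_odd_split (f : ℕ → ℝ) (k : ℕ) :
    ∑ j ∈ range (2 * k + 1), f j
      = ∑ i ∈ range (k + 1), f (2 * i) + ∑ i ∈ range k, f (2 * i + 1) := by
  induction k with
  | zero => simp
  | succ k ih =>
      have h1 : 2 * (k + 1) + 1 = (2 * k + 1) + 1 + 1 := by ring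
      rw [h1, Finset.sum_range_succ, Finset.sum_range_succ, ih,
        Finset.sum_range_succ (fun i => f (2 * i)) (k + 1),
        Finset.sum_range_succ (fun i => f (2 * i + 1)) k]
      have h2 : 2 * (k + 1) = 2 * k + 1 + 1 := by ring
      rw [h2]
      ring

lemma sum_range_even_split (f : ℕ → ℝ) (k : ℕ) :
    ∑ j ∈ range (2 * k), f j
      = ∑ i ∈ range k, f (2 * i) + ∑ i ∈ range k, f (2 * i + 1) := by
  induction k with
  | zero => simp
  | succ k ih =>
      have h1 : 2 * (k + 1) = (2 * k) + 1 + 1 := by ring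
      rw [h1, Finset.sum_range_succ, Finset.sum_range_succ, ih,
        Finset.sum_range_succ (fun i => f (2 * i)) k,
        Finset.sum_range_succ (fun i => f (2 * i + 1)) k]
      ring

lemma padv_ec {m : ℕ} (w : Fin (2 * m + 1) → ℝ) (t : ℕ) :
    padv (fun i : Fin m => padv w (2 * (i : ℕ) + 2)) t = padv w (2 * t) := by
  rcases t with _ | u
  · rw [padv_zero]; simp [padv_zero, padv]
  · rw [padv_succ]
    by_cases h : u < m
    · rw [dif_pos h]
      congr 1
    · rw [dif_neg h, eq_comm]
      apply padv_of_gt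
      omega

/-- the residual of injection-based coarse correction, componentwise. -/
lemma resid_eq {m : ℕ} (w : Fin (2 * m + 1) → ℝ) (j : Fin (2 * m + 1)) :
    (w - ((1 / 2 : ℝ) • (Wgen m (2 * m + 1))ᵀ) *ᵥ (fun i : Fin m => padv w (2 * (i : ℕ) + 2))) j
      = if (j : ℕ) % 2 = 1 then 0
        else padv w ((j : ℕ) + 1) - (padv w (j : ℕ) + padv w ((j : ℕ) + 2)) / 2 := by
  have h0 : (w - ((1 / 2 : ℝ) • (Wgen m (2 * m + 1))ᵀ) *ᵥ
      (fun i : Fin m => padv w (2 * (i : ℕ) + 2))) j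
      = w j - (1 / 2 : ℝ) * (((Wgen m (2 * m + 1))ᵀ *ᵥ
          (fun i : Fin m => padv w (2 * (i : ℕ) + 2))) j) := by
    rw [Matrix.smul_mulVec]
    simp [Pi.sub_apply, Pi.smul_apply]
  rw [h0, WgenT_mulVec, ← padv_coe w j]
  by_cases hj : (j : ℕ) % 2 = 1
  · rw [if_pos hj, if_pos hj]
    rw [padv_ec w (((j : ℕ) + 1) / 2), show 2 * (((j : ℕ) + 1) / 2) = (j : ℕ) + 1 by omega]
    ring
  · rw [if_neg hj, if_neg hj]
    rw [padv_ec w ((j : ℕ) / 2), padv_ec w ((j : ℕ) / 2 + 1),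
      show 2 * ((j : ℕ) / 2) = (j : ℕ) by omega,
      show 2 * ((j : ℕ) / 2 + 1) = (j : ℕ) + 2 by omega]
    ring

lemma approx_aux {m : ℕ} (w : Fin (2 * m + 1) → ℝ) (r : Fin (2 * m + 1) → ℝ)
    (hrj : ∀ j : Fin (2 * m + 1), r j = if (j : ℕ) % 2 = 1 then 0
        else padv w ((j : ℕ) + 1) - (padv w (j : ℕ) + padv w ((j : ℕ) + 2)) / 2) :
    (2 * (((2 * m + 1 : ℕ) : ℝ) + 1) / 3 - 1) * (r ⬝ᵥ r)
      ≤ 4 * (w ⬝ᵥ (constB (2 * m + 1 + 1) *ᵥ w)) := by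
  have hg0 : padv w 0 = 0 := padv_zero w
  have hgt : padv w (2 * m + 1 + 1) = 0 := padv_of_gt w (by omega)
  have hrr : r ⬝ᵥ r = ∑ k ∈ range (2 * m + 1), (if k % 2 = 1 then 0
      else padv w (k + 1) - (padv w k + padv w (k + 2)) / 2) ^ 2 := by
    have h1 : r ⬝ᵥ r = ∑ j : Fin (2 * m + 1), (if ((j : Fin (2 * m + 1)) : ℕ) % 2 = 1 then 0
        else padv w (((j : Fin (2 * m + 1)) : ℕ) + 1)
          - (padv w ((j : Fin (2 * m + 1)) : ℕ) + padv w (((j : Fin (2 * m + 1)) : ℕ) + 2)) / 2) ^ 2 := by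
      unfold dotProduct
      apply Finset.sum_congr rfl
      intro j _
      rw [hrj j, ← sq]
    rw [h1, Fin.sum_univ_eq_sum_range (fun k => (if k % 2 = 1 then 0
      else padv w (k + 1) - (padv w k + padv w (k + 2)) / 2) ^ 2) (2 * m + 1)]
  have hbound : r ⬝ᵥ r ≤ (1 / 2) * ∑ k ∈ range (2 * m + 1 + 1), (padv w (k + 1) - padv w k) ^ 2 := by
    rw [hrr, sum_range_odd_split]
    have hz : ∑ i ∈ range m, (if (2 * i + 1) % 2 = 1 then (0 : ℝ)
        else padv w (2 * i + 1 + 1) - (padv w (2 * i + 1) + padv w (2 * i + 1 + 2)) / 2) ^ 2 = 0 := by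
      apply Finset.sum_eq_zero; intro i _
      rw [if_pos (by omega)]; norm_num
    rw [hz, add_zero]
    have hsplit : ∑ k ∈ range (2 * m + 1 + 1), (padv w (k + 1) - padv w k) ^ 2
        = ∑ i ∈ range (m + 1), (padv w (2 * i + 1) - padv w (2 * i)) ^ 2
          + ∑ i ∈ range (m + 1), (padv w (2 * i + 1 + 1) - padv w (2 * i + 1)) ^ 2 := by
      rw [show 2 * m + 1 + 1 = 2 * (m + 1) by ring, sum_range_even_split]
    rw [hsplit]
    have per : ∀ i ∈ range (m + 1), (if (2 * i) % 2 = 1 then (0:ℝ)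
        else padv w (2 * i + 1) - (padv w (2 * i) + padv w (2 * i + 2)) / 2) ^ 2
        ≤ 1 / 2 * ((padv w (2 * i + 1) - padv w (2 * i)) ^ 2
            + (padv w (2 * i + 1 + 1) - padv w (2 * i + 1)) ^ 2) := by
      intro i _
      rw [if_neg (by omega)]
      have hidx : padv w (2 * i + 1 + 1) = padv w (2 * i + 2) := rfl
      rw [hidx]
      nlinarith [sq_nonneg ((padv w (2 * i + 1) - padv w (2 * i))
        - (padv w (2 * i + 1) - padv w (2 * i + 2)))]
    calc ∑ i ∈ range (m + 1), (if (2 * i) % 2 = 1 then (0:ℝ)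
        else padv w (2 * i + 1) - (padv w (2 * i) + padv w (2 * i + 2)) / 2) ^ 2
        ≤ ∑ i ∈ range (m + 1), (1 / 2 * ((padv w (2 * i + 1) - padv w (2 * i)) ^ 2
            + (padv w (2 * i + 1 + 1) - padv w (2 * i + 1)) ^ 2)) := Finset.sum_le_sum per
      _ = 1 / 2 * (∑ i ∈ range (m + 1), (padv w (2 * i + 1) - padv w (2 * i)) ^ 2
          + ∑ i ∈ range (m + 1), (padv w (2 * i + 1 + 1) - padv w (2 * i + 1)) ^ 2) := by
          rw [← Finset.mul_sum, Finset.sum_add_distrib]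
  have hkey := gkey (n := 2 * m + 1) (padv w) hg0 hgt
  have hquad := quadform (n := 2 * m + 1) w
  have hd : (0 : ℝ) ≤ 2 * (((2 * m + 1 : ℕ) : ℝ) + 1) / 3 - 1 := by
    have : (1 : ℝ) ≤ ((2 * m + 1 : ℕ) : ℝ) := by exact_mod_cast (by omega : 1 ≤ 2 * m + 1)
    linarith
  calc (2 * (((2 * m + 1 : ℕ) : ℝ) + 1) / 3 - 1) * (r ⬝ᵥ r)
      ≤ (2 * (((2 * m + 1 : ℕ) : ℝ) + 1) / 3 - 1)
          * ((1 / 2) * ∑ k ∈ range (2 * m + 1 + 1), (padv w (k + 1) - padv w k) ^ 2) :=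
        mul_le_mul_of_nonneg_left hbound hd
    _ ≤ 4 * (w ⬝ᵥ (constB (2 * m + 1 + 1) *ᵥ w)) := by
        rw [hquad]
        push_cast at hkey ⊢
        linarith [hkey]

/-- **Approximation property**: injection-based coarse correction. -/
lemma approx {m : ℕ} (w : Fin (2 * m + 1) → ℝ) :
    ∃ ec : Fin m → ℝ,
      (2 * (((2 * m + 1 : ℕ) : ℝ) + 1) / 3 - 1) *
          ((w - ((1 / 2 : ℝ) • (Wgen m (2 * m + 1))ᵀ) *ᵥ ec) ⬝ᵥ
            (w - ((1 / 2 : ℝ) • (Wgen m (2 * m + 1))ᵀ) *ᵥ ec))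
        ≤ 4 * (w ⬝ᵥ (constB (2 * m + 1 + 1) *ᵥ w)) :=
  ⟨fun i : Fin m => padv w (2 * (i : ℕ) + 2), approx_aux w _ (resid_eq w)⟩

lemma constB_symm (N : ℕ) : (constB N)ᵀ = constB N := by
  ext i j
  simp only [Matrix.transpose_apply, constB, Matrix.of_apply]
  split_ifs
  all_goals (try rfl)
  all_goals (exfalso; omega)

lemma constB_herm (N : ℕ) : (constB N).IsHermitian := by
  rw [Matrix.IsHermitian, Matrix.conjTranspose_eq_transpose_of_trivial, constB_symm]

lemma constB_nonneg {n N : ℕ} (hN : N = n + 1) (hn : 1 ≤ n) (v : Fin (N - 1) → ℝ) :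
    0 ≤ v ⬝ᵥ (constB N *ᵥ v) := by
  subst hN
  have hq := quadform (n := n) v
  have hg0 : padv v 0 = 0 := padv_zero v
  have hgt : padv v (n + 1) = 0 := padv_of_gt v (by omega)
  have hk := gkey (n := n) (padv v) hg0 hgt
  have hDD0 : (0:ℝ) ≤ ∑ j ∈ range (n + 1), (padv v (j + 1) - padv v j) ^ 2 :=
    Finset.sum_nonneg (fun j _ => sq_nonneg _)
  have hd : (0:ℝ) ≤ 2 * ((n : ℝ) + 1) / 3 - 1 := by
    have : (1:ℝ) ≤ (n : ℝ) := by exact_mod_cast hn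
    linarith
  nlinarith [mul_nonneg hd hDD0]

lemma constB_posdef {n N : ℕ} (hN : N = n + 1) (hn : 1 ≤ n) : (constB N).PosDef := by
  refine Matrix.PosDef.of_dotProduct_mulVec_pos (constB_herm N) (fun x hx => ?_)
  have h0 : 0 ≤ x ⬝ᵥ (constB N *ᵥ x) := constB_nonneg hN hn x
  have hstar : (star x : Fin (N - 1) → ℝ) = x := by
    funext i; simp
  rw [hstar]
  rcases lt_or_eq_of_le h0 with h | h
  · exact h
  · exfalso
    apply hx
    subst hN
    have hq := quadform (n := n) x
    have hg0 : padv x 0 = 0 := padv_zero x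
    have hgt : padv x (n + 1) = 0 := padv_of_gt x (by omega)
    have hk := gkey (n := n) (padv x) hg0 hgt
    have hd : (0:ℝ) < 2 * ((n : ℝ) + 1) / 3 - 1 := by
      have : (1:ℝ) ≤ (n : ℝ) := by exact_mod_cast hn
      linarith
    have hDD0 : (0:ℝ) ≤ ∑ j ∈ range (n + 1), (padv x (j + 1) - padv x j) ^ 2 :=
      Finset.sum_nonneg (fun j _ => sq_nonneg _)
    have hDDz : ∑ j ∈ range (n + 1), (padv x (j + 1) - padv x j) ^ 2 = 0 := by
      nlinarith
    have hterm : ∀ j ∈ range (n + 1), (padv x (j + 1) - padv x j) ^ 2 = 0 :=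
      (Finset.sum_eq_zero_iff_of_nonneg (fun j _ => sq_nonneg _)).mp hDDz
    have hstep : ∀ j, j ≤ n → padv x (j + 1) = padv x j := by
      intro j hj
      have := hterm j (Finset.mem_range.mpr (by omega))
      have h2 : padv x (j + 1) - padv x j = 0 := by
        exact pow_eq_zero_iff (by norm_num) |>.mp this
      linarith
    have hall : ∀ j, j ≤ n + 1 → padv x j = 0 := by
      intro j
      induction j with
      | zero => intro _; exact hg0
      | succ k ih => intro h; rw [hstep k (by omega)]; exact ih (by omega)
    funext i
    have := hall ((i : ℕ) + 1) (by omega)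
    rwa [padv_coe] at this

lemma isUnit_smul_mat {k : ℕ} {c : ℝ} (hc : c ≠ 0) (M : Matrix (Fin k) (Fin k) ℝ) :
    IsUnit (c • M) ↔ IsUnit M := by
  rw [Matrix.isUnit_iff_isUnit_det, Matrix.isUnit_iff_isUnit_det, Matrix.det_smul,
    isUnit_iff_ne_zero, isUnit_iff_ne_zero, mul_ne_zero_iff]
  have := pow_ne_zero (Fintype.card (Fin k)) hc
  tauto

lemma smul_mem_spectrum {k : ℕ} {A : Matrix (Fin k) (Fin k) ℝ} {d t : ℝ} (hd : d ≠ 0)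
    (ht : t ∈ spectrum ℝ A) : d⁻¹ * t ∈ spectrum ℝ (d⁻¹ • A) := by
  rw [spectrum.mem_iff] at ht ⊢
  intro hu
  apply ht
  rw [Algebra.algebraMap_eq_smul_one] at hu ⊢
  have he : (d⁻¹ * t) • (1 : Matrix (Fin k) (Fin k) ℝ) - d⁻¹ • A = d⁻¹ • (t • 1 - A) := by
    rw [smul_sub, smul_smul]
  rw [he] at hu
  exact (isUnit_smul_mat (inv_ne_zero hd) _).mp hu

lemma quad_form_le {k : ℕ} {A : Matrix (Fin k) (Fin k) ℝ} (hA : A.IsHermitian) {c : ℝ}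
    (h : ∀ t ∈ spectrum ℝ A, t ≤ c) (y : Fin k → ℝ) :
    y ⬝ᵥ (A *ᵥ y) ≤ c * (y ⬝ᵥ y) := by
  have hAt : Aᵀ = A := by
    rw [← Matrix.conjTranspose_eq_transpose_of_trivial]; exact hA
  set C := c • (1 : Matrix (Fin k) (Fin k) ℝ) - A with hC
  have hCh : C.IsHermitian := by
    rw [Matrix.IsHermitian, Matrix.conjTranspose_eq_transpose_of_trivial, hC,
      Matrix.transpose_sub, Matrix.transpose_smul, Matrix.transpose_one, hAt]
  have hpsd : C.PosSemidef := by
    apply (Matrix.IsHermitian.posSemidef_iff_eigenvalues_nonneg hCh).mpr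
    intro i
    have ht : hCh.eigenvalues i ∈ spectrum ℝ C := hCh.eigenvalues_mem_spectrum_real i
    set t := hCh.eigenvalues i with htdef
    have hmem : c - t ∈ spectrum ℝ A := by
      rw [spectrum.mem_iff] at ht ⊢
      intro hu
      apply ht
      rw [Algebra.algebraMap_eq_smul_one] at hu ⊢
      have he : t • (1 : Matrix (Fin k) (Fin k) ℝ) - C
          = -((c - t) • (1 : Matrix (Fin k) (Fin k) ℝ) - A) := by
        rw [hC]; module
      rw [he]
      exact hu.neg
    have := h _ hmem
    change (0:ℝ) ≤ t
    linarith
  have h2 := hpsd.dotProduct_mulVec_nonneg y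
  have hstar : (star y : Fin k → ℝ) = y := by funext i; simp
  rw [hstar] at h2
  have he : C *ᵥ y = c • y - A *ᵥ y := by
    rw [hC, Matrix.sub_mulVec, Matrix.smul_mulVec, Matrix.one_mulVec]
  rw [he, dotProduct_sub, dotProduct_smul, smul_eq_mul] at h2
  linarith

lemma approxN {m N : ℕ} (hN : N = 2 * m + 2) (w : Fin (N - 1) → ℝ) :
    ∃ ec : Fin m → ℝ,
      (2 * (N : ℝ) / 3 - 1) *
          ((w - ((1 / 2 : ℝ) • (Wgen m (N - 1))ᵀ) *ᵥ ec) ⬝ᵥ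
            (w - ((1 / 2 : ℝ) • (Wgen m (N - 1))ᵀ) *ᵥ ec))
        ≤ 4 * (w ⬝ᵥ (constB N *ᵥ w)) := by
  subst hN
  have hc : 2 * (((2 * m + 2 : ℕ)) : ℝ) / 3 - 1
      = 2 * (((2 * m + 1 : ℕ) : ℝ) + 1) / 3 - 1 := by push_cast; ring
  rw [hc]
  exact approx w

lemma Wgen_inj {m N : ℕ} (hN : N = 2 * m + 2) (x : Fin m → ℝ)
    (hx : (Wgen m (N - 1))ᵀ *ᵥ x = 0) : x = 0 := by
  subst hN
  funext i
  have hj : 2 * (i : ℕ) + 1 < 2 * m + 1 := by omega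
  have h1 := congrFun hx ⟨2 * (i : ℕ) + 1, hj⟩
  rw [WgenT_mulVec] at h1
  simp only [Pi.zero_apply] at h1
  rw [if_pos (by omega), show (2 * (i : ℕ) + 1 + 1) / 2 = (i : ℕ) + 1 by omega,
    padv_coe] at h1
  have : x i = 0 := by linarith
  simpa using this

lemma scalar_key {A RR UU d : ℝ} (hd : 0 < d) (hA : 0 < A) (hUU : 0 ≤ UU)
    (hCS : A ^ 2 ≤ RR * UU) (h4 : d * RR ≤ 4 * A) : d * A ≤ 4 * UU := by
  nlinarith [mul_le_mul_of_nonneg_left hCS hd.le, mul_le_mul_of_nonneg_right h4 hUU,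
    mul_pos hA hA]


set_option maxHeartbeats 1000000 in
/-- **Two-grid convergence for the constant-kernel stiffness matrix.**
With `N = 2^q` (`q ≥ 2`), `B = constB N`, `D` its diagonal part,
`λ_max(D⁻¹B) ≤ η₀ < 3`, `0 < ω < 2/η₀`, `0 < η ≤ ω(2 − ωη₀)`, full-weighting
restriction `R = (1/4)W`, prolongation `P = (1/2)Wᵀ`, `K = I − ωD⁻¹B` and
`T = I − P(RBP)⁻¹RB`: then `RBP` is invertible and
`‖KTv‖_B² ≤ (1 − η/4)‖v‖_B²` for all `v`. -/
theorem stmt18 (q : ℕ) (hq : 2 ≤ q)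
    (η₀ ω η : ℝ)
    (hmax : ∀ μ ∈ spectrum ℝ
        ((Matrix.diagonal fun i => constB (2 ^ q) i i)⁻¹ * constB (2 ^ q)), μ ≤ η₀)
    (hη₀ : η₀ < 3) (hω : 0 < ω) (hω' : ω < 2 / η₀)
    (hη : 0 < η) (hη' : η ≤ ω * (2 - ω * η₀)) :
    let N : ℕ := 2 ^ q
    let B := constB N
    let D := Matrix.diagonal fun i => B i i
    let W := Wgen (2 ^ (q - 1) - 1) (N - 1)
    let P := (1 / 2 : ℝ) • Wᵀ
    let R := (1 / 4 : ℝ) • W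
    let K := (1 : Matrix (Fin (N - 1)) (Fin (N - 1)) ℝ) - ω • (D⁻¹ * B)
    let Ac := R * B * P
    let T := (1 : Matrix (Fin (N - 1)) (Fin (N - 1)) ℝ) - P * Ac⁻¹ * (R * B)
    IsUnit Ac ∧
      ∀ v : Fin (N - 1) → ℝ,
        ((K * T) *ᵥ v) ⬝ᵥ (B *ᵥ ((K * T) *ᵥ v)) ≤ (1 - η / 4) * (v ⬝ᵥ (B *ᵥ v)) := by
  intro N B D W P R K Ac T
  have hNval : N = 2 ^ q := rfl
  have hpow : (2 : ℕ) ^ q = 2 * 2 ^ (q - 1) := by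
    conv_lhs => rw [show q = (q - 1) + 1 by omega]
    rw [pow_succ]
    ring
  have hm1 : 1 ≤ (2 : ℕ) ^ (q - 1) := Nat.one_le_two_pow
  have hm2 : 2 ≤ (2 : ℕ) ^ (q - 1) := by
    calc (2:ℕ) = 2 ^ 1 := rfl
    _ ≤ 2 ^ (q - 1) := Nat.pow_le_pow_right (by norm_num) (by omega)
  have hN4 : 4 ≤ N := by rw [hNval]; omega
  have hNm : N = 2 * (2 ^ (q - 1) - 1) + 2 := by rw [hNval]; omega
  have hn3 : 3 ≤ N - 1 := by omega
  set dv : ℝ := 2 * (N : ℝ) / 3 - 1 with hdv_def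
  have hNr : (4 : ℝ) ≤ (N : ℝ) := by exact_mod_cast hN4
  have hdv : 0 < dv := by rw [hdv_def]; linarith
  -- basic facts about B
  have hBval : B = constB N := rfl
  have hBt : Bᵀ = B := constB_symm N
  have hdot : ∀ a b : Fin (N - 1) → ℝ, a ⬝ᵥ (B *ᵥ b) = (B *ᵥ a) ⬝ᵥ b := by
    intro a b
    rw [Matrix.dotProduct_mulVec, ← Matrix.mulVec_transpose, hBt]
  have hpsd : ∀ x : Fin (N - 1) → ℝ, 0 ≤ x ⬝ᵥ (B *ᵥ x) :=
    fun x => constB_nonneg (n := N - 1) (by omega) (by omega) x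
  have hpd : B.PosDef := constB_posdef (n := N - 1) (by omega) (by omega)
  -- the diagonal
  have hdiag : D = Matrix.diagonal (fun _ : Fin (N - 1) => dv) := by
    have hdval : (fun i : Fin (N - 1) => B i i) = fun _ => dv :=
      funext (fun i => by show constB N i i = dv; simp [constB, hdv_def])
    show Matrix.diagonal (fun i => B i i) = _
    rw [hdval]
  have hDinv : D⁻¹ = Matrix.diagonal (fun _ : Fin (N - 1) => dv⁻¹) := by
    apply Matrix.inv_eq_right_inv
    rw [hdiag, Matrix.diagonal_mul_diagonal]
    have h1 : (fun i : Fin (N - 1) => dv * dv⁻¹) = fun _ => (1 : ℝ) :=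
      funext fun i => mul_inv_cancel₀ hdv.ne'
    rw [h1, Matrix.diagonal_one]
  have hDB : D⁻¹ * B = dv⁻¹ • B := by
    rw [hDinv]
    ext i j
    simp [Matrix.diagonal_mul, Matrix.smul_apply, smul_eq_mul]
  -- spectral bound
  have hspecB : ∀ t ∈ spectrum ℝ B, t ≤ η₀ * dv := by
    intro t ht
    have h2 := smul_mem_spectrum (d := dv) hdv.ne' ht
    rw [← hDB] at h2
    have h3 := hmax _ h2
    have h4 : t = dv * (dv⁻¹ * t) := by field_simp
    have h5 := mul_le_mul_of_nonneg_left h3 hdv.le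
    rw [← h4] at h5
    linarith
  have hupper : ∀ y : Fin (N - 1) → ℝ, y ⬝ᵥ (B *ᵥ y) ≤ (η₀ * dv) * (y ⬝ᵥ y) :=
    fun y => quad_form_le (constB_herm N) hspecB y
  -- η₀ ≥ 1 and η ≤ 1
  have hη₀1 : 1 ≤ η₀ := by
    set j0 : Fin (N - 1) := ⟨0, by omega⟩
    set e0 : Fin (N - 1) → ℝ := Pi.single j0 1 with he0
    have h1 : e0 ⬝ᵥ (B *ᵥ e0) = dv := by
      have hb : constB N j0 j0 = dv := by simp [constB, hdv_def]
      rw [he0, Matrix.mulVec_single, dotProduct_comm, dotProduct_single]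
      simpa using hb
    have h2 : e0 ⬝ᵥ e0 = 1 := by
      simp [he0, dotProduct_single]
    have h3 := hupper e0
    rw [h1, h2] at h3
    nlinarith [hdv]
  have hη1 : η ≤ 1 := by
    nlinarith [sq_nonneg (1 - ω * η₀), hη', hη, hη₀1, hω]
  -- positive-definiteness of the coarse matrix
  have hAc8 : Ac = (8⁻¹ : ℝ) • (W * B * Wᵀ) := by
    show ((1 / 4 : ℝ) • W) * B * ((1 / 2 : ℝ) • Wᵀ) = _
    rw [Matrix.smul_mul, Matrix.smul_mul, Matrix.mul_smul, smul_smul]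
    norm_num
  have hWt : ∀ x : Fin (2 ^ (q - 1) - 1) → ℝ, Wᵀ *ᵥ x = 0 → x = 0 :=
    fun x hx => Wgen_inj hNm x hx
  have hWBWpd : (W * B * Wᵀ).PosDef := by
    refine Matrix.PosDef.of_dotProduct_mulVec_pos ?_ ?_
    · rw [Matrix.IsHermitian, Matrix.conjTranspose_eq_transpose_of_trivial,
        Matrix.transpose_mul, Matrix.transpose_mul, Matrix.transpose_transpose, hBt,
        Matrix.mul_assoc]
    · intro x hx
      have hy : Wᵀ *ᵥ x ≠ 0 := fun h => hx (hWt x h)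
      have hstar : (star x : Fin (2 ^ (q - 1) - 1) → ℝ) = x := by funext i; simp
      rw [hstar]
      have hform : x ⬝ᵥ ((W * B * Wᵀ) *ᵥ x) = (Wᵀ *ᵥ x) ⬝ᵥ (B *ᵥ (Wᵀ *ᵥ x)) := by
        rw [← Matrix.mulVec_mulVec, ← Matrix.mulVec_mulVec,
          Matrix.dotProduct_mulVec x W _, ← Matrix.mulVec_transpose]
      rw [hform]
      have := hpd.dotProduct_mulVec_pos hy
      have hstar2 : (star (Wᵀ *ᵥ x) : Fin (N - 1) → ℝ) = Wᵀ *ᵥ x := by funext i; simp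
      rwa [hstar2] at this
  have hAcPD : Ac.PosDef := by
    rw [hAc8]
    refine Matrix.PosDef.of_dotProduct_mulVec_pos ?_ ?_
    · rw [Matrix.IsHermitian, Matrix.conjTranspose_smul, hWBWpd.1]
      simp
    · intro x hx
      rw [Matrix.smul_mulVec, dotProduct_smul, smul_eq_mul]
      have := hWBWpd.dotProduct_mulVec_pos hx
      positivity
  refine ⟨hAcPD.isUnit, ?_⟩
  intro v
  have hdet : IsUnit Ac.det := (Matrix.isUnit_iff_isUnit_det Ac).mp hAcPD.isUnit
  have hAcinv : Ac * Ac⁻¹ = 1 := Matrix.mul_nonsing_inv Ac hdet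
  set cc : Fin (2 ^ (q - 1) - 1) → ℝ := Ac⁻¹ *ᵥ (R *ᵥ (B *ᵥ v)) with hcc
  have hTv : T *ᵥ v = v - P *ᵥ cc := by
    show ((1 : Matrix (Fin (N - 1)) (Fin (N - 1)) ℝ) - P * Ac⁻¹ * (R * B)) *ᵥ v = _
    rw [Matrix.sub_mulVec, Matrix.one_mulVec]
    congr 1
    rw [← Matrix.mulVec_mulVec, ← Matrix.mulVec_mulVec, hcc, ← Matrix.mulVec_mulVec]
  set w : Fin (N - 1) → ℝ := T *ᵥ v with hw
  set u : Fin (N - 1) → ℝ := B *ᵥ w with hu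
  -- the coarse-grid-corrected error is B-orthogonal to the coarse space
  have hWu : W *ᵥ u = 0 := by
    have h1 : W *ᵥ u = W *ᵥ (B *ᵥ v) - (W * B * P) *ᵥ cc := by
      rw [hu, hTv, Matrix.mulVec_sub, Matrix.mulVec_sub,
        Matrix.mulVec_mulVec, Matrix.mulVec_mulVec, Matrix.mulVec_mulVec]
    have h2 : W * B * P = (4 : ℝ) • Ac := by
      have hP : P = (1 / 2 : ℝ) • Wᵀ := rfl
      rw [hAc8, hP, Matrix.mul_smul, smul_smul]
      norm_num
    have h3 : (W * B * P) *ᵥ cc = W *ᵥ (B *ᵥ v) := by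
      rw [h2, Matrix.smul_mulVec, hcc, Matrix.mulVec_mulVec, hAcinv,
        Matrix.one_mulVec]
      show (4 : ℝ) • (((1 / 4 : ℝ) • W) *ᵥ (B *ᵥ v)) = _
      rw [Matrix.smul_mulVec, smul_smul]
      norm_num
    rw [h1, h3, sub_self]
  have hucoarse : ∀ z : Fin (2 ^ (q - 1) - 1) → ℝ, (P *ᵥ z) ⬝ᵥ u = 0 := by
    intro z
    show (((1 / 2 : ℝ) • Wᵀ) *ᵥ z) ⬝ᵥ u = 0
    rw [Matrix.smul_mulVec, smul_dotProduct, Matrix.mulVec_transpose,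
      ← Matrix.dotProduct_mulVec, hWu, dotProduct_zero, smul_zero]
  -- monotonicity of the energy norm under the coarse-grid correction
  have hmono : w ⬝ᵥ u ≤ v ⬝ᵥ (B *ᵥ v) := by
    have hv : v = w + P *ᵥ cc := by rw [hTv]; funext i; simp
    have hexp : v ⬝ᵥ (B *ᵥ v) = w ⬝ᵥ u + (P *ᵥ cc) ⬝ᵥ (B *ᵥ (P *ᵥ cc)) := by
      have hcross : w ⬝ᵥ (B *ᵥ (P *ᵥ cc)) = 0 := by
        rw [hdot, dotProduct_comm, ← hu, hucoarse cc]
      calc v ⬝ᵥ (B *ᵥ v) = (w + P *ᵥ cc) ⬝ᵥ (B *ᵥ (w + P *ᵥ cc)) := by rw [← hv]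
        _ = w ⬝ᵥ u + ((P *ᵥ cc) ⬝ᵥ u + (w ⬝ᵥ (B *ᵥ (P *ᵥ cc))
              + (P *ᵥ cc) ⬝ᵥ (B *ᵥ (P *ᵥ cc)))) := by
            rw [Matrix.mulVec_add, add_dotProduct, dotProduct_add,
              dotProduct_add, hu]
            ring
        _ = w ⬝ᵥ u + (P *ᵥ cc) ⬝ᵥ (B *ᵥ (P *ᵥ cc)) := by
            rw [hucoarse cc, hcross]; ring
    linarith [hpsd (P *ᵥ cc), hexp.ge, hexp.le]
  -- approximation property
  obtain ⟨ec, hec⟩ := approxN (m := 2 ^ (q - 1) - 1) hNm w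
  have huu0 : 0 ≤ u ⬝ᵥ u := Finset.sum_nonneg (fun i _ => mul_self_nonneg _)
  have hwu0 : 0 ≤ w ⬝ᵥ u := hpsd w
  have hkey : dv * (w ⬝ᵥ u) ≤ 4 * (u ⬝ᵥ u) := by
    have hrP : (w - ((1 / 2 : ℝ) • (Wgen (2 ^ (q - 1) - 1) (N - 1))ᵀ) *ᵥ ec)
        = w - P *ᵥ ec := rfl
    rw [hrP] at hec
    set r : Fin (N - 1) → ℝ := w - P *ᵥ ec with hr
    have hwr : w ⬝ᵥ u = r ⬝ᵥ u := by
      rw [hr, sub_dotProduct, hucoarse ec, sub_zero]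
    have hCS : (r ⬝ᵥ u) ^ 2 ≤ (r ⬝ᵥ r) * (u ⬝ᵥ u) := by
      have h1 := Finset.sum_mul_sq_le_sq_mul_sq Finset.univ r u
      have h2 : ∑ i, r i ^ 2 = r ⬝ᵥ r := by
        unfold dotProduct; exact Finset.sum_congr rfl (fun i _ => (sq (r i)) ▸ rfl)
      have h3 : ∑ i, u i ^ 2 = u ⬝ᵥ u := by
        unfold dotProduct; exact Finset.sum_congr rfl (fun i _ => (sq (u i)) ▸ rfl)
      calc (r ⬝ᵥ u) ^ 2 = (∑ i, r i * u i) ^ 2 := rfl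
        _ ≤ (∑ i, r i ^ 2) * (∑ i, u i ^ 2) := h1
        _ = (r ⬝ᵥ r) * (u ⬝ᵥ u) := by rw [h2, h3]
    have h4 : dv * (r ⬝ᵥ r) ≤ 4 * (w ⬝ᵥ u) := hec
    have hrr0 : 0 ≤ r ⬝ᵥ r := Finset.sum_nonneg (fun i _ => mul_self_nonneg _)
    rcases eq_or_lt_of_le hwu0 with h0 | h0
    · rw [← h0]
      nlinarith [huu0]
    · rw [hwr] at h0 ⊢
      rw [hwr] at h4
      exact scalar_key hdv h0 huu0 hCS h4
  -- smoothing step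
  have hKw : K *ᵥ w = w - (ω * dv⁻¹) • u := by
    show ((1 : Matrix (Fin (N - 1)) (Fin (N - 1)) ℝ) - ω • (D⁻¹ * B)) *ᵥ w = _
    rw [Matrix.sub_mulVec, Matrix.one_mulVec, Matrix.smul_mulVec, hDB,
      Matrix.smul_mulVec, smul_smul, hu]
  have hfinal : (K *ᵥ w) ⬝ᵥ (B *ᵥ (K *ᵥ w)) ≤ (1 - η / 4) * (w ⬝ᵥ u) := by
    rw [hKw]
    have hBKw : B *ᵥ (w - (ω * dv⁻¹) • u) = u - (ω * dv⁻¹) • (B *ᵥ u) := by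
      rw [Matrix.mulVec_sub, Matrix.mulVec_smul, hu]
    rw [hBKw]
    have hwBu : w ⬝ᵥ (B *ᵥ u) = u ⬝ᵥ u := by rw [hdot, ← hu]
    have hexp : (w - (ω * dv⁻¹) • u) ⬝ᵥ (u - (ω * dv⁻¹) • (B *ᵥ u))
        = w ⬝ᵥ u - 2 * (ω * dv⁻¹) * (u ⬝ᵥ u)
          + (ω * dv⁻¹) ^ 2 * (u ⬝ᵥ (B *ᵥ u)) := by
      rw [sub_dotProduct, dotProduct_sub, dotProduct_sub,
        smul_dotProduct, smul_dotProduct, dotProduct_smul,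
        dotProduct_smul, hwBu, smul_eq_mul, smul_eq_mul, smul_eq_mul]
      ring
    rw [hexp]
    have hub : u ⬝ᵥ (B *ᵥ u) ≤ (η₀ * dv) * (u ⬝ᵥ u) := hupper u
    have hI : dv * dv⁻¹ = 1 := mul_inv_cancel₀ hdv.ne'
    have hI0 : 0 ≤ dv⁻¹ := inv_nonneg.mpr hdv.le
    -- e1 : the B-term bound
    have e1 : (ω * dv⁻¹) ^ 2 * (u ⬝ᵥ (B *ᵥ u)) ≤ ω ^ 2 * η₀ * dv⁻¹ * (u ⬝ᵥ u) := by
      have h1 : (ω * dv⁻¹) ^ 2 * (u ⬝ᵥ (B *ᵥ u)) ≤ (ω * dv⁻¹) ^ 2 * ((η₀ * dv) * (u ⬝ᵥ u)) :=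
        mul_le_mul_of_nonneg_left hub (sq_nonneg _)
      have h2 : (ω * dv⁻¹) ^ 2 * ((η₀ * dv) * (u ⬝ᵥ u))
          = ω ^ 2 * η₀ * dv⁻¹ * (u ⬝ᵥ u) * (dv * dv⁻¹) := by ring
      rw [h2, hI, mul_one] at h1
      exact h1
    -- e2 : fine-to-coarse comparison
    have e2 : η * (w ⬝ᵥ u) ≤ 4 * η * dv⁻¹ * (u ⬝ᵥ u) := by
      have h1 : (dv * (w ⬝ᵥ u)) * dv⁻¹ ≤ (4 * (u ⬝ᵥ u)) * dv⁻¹ :=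
        mul_le_mul_of_nonneg_right hkey hI0
      have h2 : (dv * (w ⬝ᵥ u)) * dv⁻¹ = (w ⬝ᵥ u) * (dv * dv⁻¹) := by ring
      rw [h2, hI, mul_one] at h1
      nlinarith [hη]
    -- e3 : the smoothing coefficient
    have e3 : η * dv⁻¹ * (u ⬝ᵥ u) ≤ ω * (2 - ω * η₀) * dv⁻¹ * (u ⬝ᵥ u) := by
      apply mul_le_mul_of_nonneg_right _ huu0
      apply mul_le_mul_of_nonneg_right hη' hI0
    linarith [e1, e2, e3]
  have hgoal : (K * T) *ᵥ v = K *ᵥ w := by rw [hw, Matrix.mulVec_mulVec]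
  rw [hgoal]
  calc (K *ᵥ w) ⬝ᵥ (B *ᵥ (K *ᵥ w)) ≤ (1 - η / 4) * (w ⬝ᵥ u) := hfinal
    _ ≤ (1 - η / 4) * (v ⬝ᵥ (B *ᵥ v)) := by
        apply mul_le_mul_of_nonneg_left hmono
        linarith
end
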